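/- Model Composition is symmetric in consequence: with a, b ∈ ℝⁿ and c defined as c_k = a_{k-n} + b_{k-n} - Σ_{j+ℓ=k+1} a_j·b_ℓ (indices of a, b in 1..n, zero otherwise), if b solves a sequence z : ℤ → ℝ in the length-n sense, then c solves z in the length-2n sense. -/

import Mathlib

/-!
Expand `∑ₖ cₖ z(m+k)` into three sums. The shifted `b`-part is `z(m+2n)` by the recurrence of `b`
at `m+n`, and the shifted `a`-part equals the convolution part `∑ⱼ,ₗ aⱼ bₗ z(m+j+l)` by the
recurrence of `b` at each `m+j`, so these two cancel.
-/

open Finset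

/-- Indices start at `0`: this is the paper's `∑_{i=1}^m vᵢ y(m₀+i-1) = y(m₀+m)`. -/
def Solves {R : Type*} [Semiring R] {m : ℕ} (v : Fin m → R) (y : ℤ → R) : Prop :=
  ∀ m₀ : ℤ, ∑ i : Fin m, v i * y (m₀ + (i : ℕ)) = y (m₀ + (m : ℕ))

theorem Solves.sum_mul_shift {R : Type*} [CommSemiring R] {n : ℕ} {b : Fin n → R} {y : ℤ → R}
    (hb : Solves b y) (a : Fin n → R) (m : ℤ) :
    ∑ j : Fin n, a j * y (m + (n + j : ℕ)) = ∑ j : Fin n, ∑ l : Fin n, a j * b l * y (m + (j + l : ℕ)) := by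
  refine sum_congr rfl fun j _ => ?_
  have hj := hb (m + (j : ℕ))
  push_cast at hj ⊢
  rw [add_comm (n : ℤ), ← add_assoc, ← hj, mul_sum]
  exact sum_congr rfl fun l _ => by rw [mul_assoc, add_assoc]

theorem Fin.sum_univ_two_mul {M : Type*} [AddCommMonoid M] (n : ℕ) (g : Fin (2 * n) → M) :
    ∑ k, g k = ∑ j : Fin n, g ⟨j, by omega⟩ + ∑ j : Fin n, g ⟨n + j, by omega⟩ := by
  rw [← Fin.sum_congr' g (two_mul n).symm, Fin.sum_univ_add]
  rfl

theorem sum_dite_sub_mul {R : Type*} [Semiring R] {n : ℕ} (w : Fin n → R) (f : ℕ → R) :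
    ∑ k : Fin (2 * n),
        (if h : n ≤ (k : ℕ) then w ⟨(k : ℕ) - n, by omega⟩ else 0) * f k
      = ∑ j : Fin n, w j * f (n + j) := by
  rw [Fin.sum_univ_two_mul]
  simp [fun j : Fin n => Nat.not_le_of_lt j.isLt]

theorem sum_convolution_mul {R : Type*} [Semiring R] {p q N : ℕ} (hN : p + q ≤ N)
    (x : Fin p → Fin q → R) (f : ℕ → R) :
    ∑ k : Fin N, (∑ j : Fin p, ∑ l : Fin q, if (j : ℕ) + (l : ℕ) = (k : ℕ) then x j l else 0) * f k
      = ∑ j : Fin p, ∑ l : Fin q, x j l * f (j + l) := by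
  simp only [sum_mul, ite_mul, zero_mul]
  rw [sum_comm]
  refine sum_congr rfl fun j _ => ?_
  rw [sum_comm]
  refine sum_congr rfl fun l _ => ?_
  rw [sum_eq_single_of_mem (⟨j + l, by omega⟩ : Fin N) (mem_univ _)]
  · simp
  · intro k _ hk
    rw [if_neg fun h => hk (Fin.ext h.symm)]

/-- Model composition is symmetric in consequence: if `b` solves `z` in the
length-`n` sense, then the composition `c` of `a` and `b` solves `z` in the
length-`2n` sense. -/
theorem stmt_6 (n : ℕ) (a b : Fin n → ℝ) (c : Fin (2 * n) → ℝ) (z : ℤ → ℝ)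
    (hb : ∀ m : ℤ, (∑ i : Fin n, b i * z (m + (i : ℕ))) = z (m + (n : ℕ)))
    (hc : ∀ k : Fin (2 * n),
      c k =
        (if h : n ≤ (k : ℕ) then a ⟨(k : ℕ) - n, by have := k.isLt; omega⟩ else 0)
        + (if h : n ≤ (k : ℕ) then b ⟨(k : ℕ) - n, by have := k.isLt; omega⟩ else 0)
        - ∑ j : Fin n, ∑ l : Fin n,
            if (j : ℕ) + (l : ℕ) = (k : ℕ) then a j * b l else 0) :
    ∀ m : ℤ, (∑ k : Fin (2 * n), c k * z (m + (k : ℕ))) = z (m + (2 * n : ℕ)) := by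
  intro m
  simp only [hc, sub_mul, add_mul, sum_sub_distrib, sum_add_distrib]
  rw [sum_dite_sub_mul a (fun k => z (m + k)), sum_dite_sub_mul b (fun k => z (m + k)),
    sum_convolution_mul (two_mul n).ge _ (fun k => z (m + k)),
    Solves.sum_mul_shift hb a m, add_sub_cancel_left]
  simpa only [two_mul, Nat.cast_add, add_assoc] using hb (m + n)
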